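/- arXiv:1504.06043 — 5 statements merged into one kernel-verified Lean document; each statement's English description precedes it below -/
import Mathlib

section
/- For every x ∈ ℝ^d and y ∈ S the set h_∞(x,y) is nonempty, sup_{u ∈ h_∞(x,y)} ‖u‖ ≤ K(1 + ‖x‖), and sup_{u ∈ H(x)} ‖u‖ ≤ K(1 + ‖x‖), where K is a constant such that ‖h_c(x,y)‖ ≤ K(1 + ‖x‖) for all c ≥ 1, x ∈ ℝ^d, y ∈ S. -/
open Filter Metric Set

/-- The rescaled map `h_c(x, y) := h(c x, y) / c`. -/
noncomputable def hScaled {d : ℕ} {S : Type*}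
    (h : EuclideanSpace ℝ (Fin d) → S → EuclideanSpace ℝ (Fin d))
    (c : ℝ) (x : EuclideanSpace ℝ (Fin d)) (y : S) : EuclideanSpace ℝ (Fin d) :=
  c⁻¹ • h (c • x) y

/-- `h_∞(x,y) := Limsup_{c → ∞} {h_c(x,y)}`, the set of `u` such that
`liminf_{c→∞} d(u, {h_c(x,y)}) = 0`. -/
noncomputable def hLimit {d : ℕ} {S : Type*}
    (h : EuclideanSpace ℝ (Fin d) → S → EuclideanSpace ℝ (Fin d))
    (x : EuclideanSpace ℝ (Fin d)) (y : S) : Set (EuclideanSpace ℝ (Fin d)) :=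
  {u | Filter.liminf (fun c : ℝ => dist u (hScaled h c x y)) Filter.atTop = 0}

/-- `H(x)`, the closed convex hull of `⋃_{y ∈ S} h_∞(x,y)`. -/
noncomputable def Hmap {d : ℕ} {S : Type*}
    (h : EuclideanSpace ℝ (Fin d) → S → EuclideanSpace ℝ (Fin d))
    (x : EuclideanSpace ℝ (Fin d)) : Set (EuclideanSpace ℝ (Fin d)) :=
  closure (convexHull ℝ (⋃ y : S, hLimit h x y))

/-- For every `x ∈ ℝ^d` and `y ∈ S` the set `h_∞(x,y)` is nonempty,
`sup_{u ∈ h_∞(x,y)} ‖u‖ ≤ K(1 + ‖x‖)`, and `sup_{u ∈ H(x)} ‖u‖ ≤ K(1 + ‖x‖)`,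
where `K` is a constant such that `‖h_c(x,y)‖ ≤ K(1 + ‖x‖)` for all `c ≥ 1, x, y`. -/
theorem stmt2 {d : ℕ} {S : Type*} [MetricSpace S] [CompactSpace S]
    (h : EuclideanSpace ℝ (Fin d) → S → EuclideanSpace ℝ (Fin d)) (L K : ℝ)
    (hjc : Continuous fun p : EuclideanSpace ℝ (Fin d) × S => h p.1 p.2)
    (hlip : ∀ (x₁ x₂ : EuclideanSpace ℝ (Fin d)) (y : S),
      ‖h x₁ y - h x₂ y‖ ≤ L * ‖x₁ - x₂‖)
    (hK : ∀ c : ℝ, 1 ≤ c → ∀ (x : EuclideanSpace ℝ (Fin d)) (y : S),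
      ‖hScaled h c x y‖ ≤ K * (1 + ‖x‖)) :
    ∀ (x : EuclideanSpace ℝ (Fin d)) (y : S),
      (hLimit h x y).Nonempty ∧
      (∀ u ∈ hLimit h x y, ‖u‖ ≤ K * (1 + ‖x‖)) ∧
      (∀ u ∈ Hmap h x, ‖u‖ ≤ K * (1 + ‖x‖)) := by
  intro x y
  set R := K * (1 + ‖x‖) with hR
  -- the bound on each hLimit
  have hbound : ∀ y' : S, ∀ u ∈ hLimit h x y', ‖u‖ ≤ R := by
    intro y' u hu
    refine le_of_forall_pos_le_add ?_
    intro ε hε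
    have hcob : Filter.IsCoboundedUnder (· ≥ ·) Filter.atTop
        (fun c : ℝ => dist u (hScaled h c x y')) := by
      apply Filter.IsBoundedUnder.isCoboundedUnder_ge
      apply Filter.isBoundedUnder_of_eventually_le (a := dist u 0 + R)
      filter_upwards [eventually_ge_atTop (1:ℝ)] with c hc
      calc dist u (hScaled h c x y') ≤ dist u 0 + dist 0 (hScaled h c x y') := dist_triangle _ _ _
        _ ≤ dist u 0 + R := by
            have := hK c hc x y'
            simp only [dist_zero_left, dist_zero_right]
            linarith
    have hfreq : ∃ᶠ c in Filter.atTop, dist u (hScaled h c x y') < ε :=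
      frequently_lt_of_liminf_lt hcob (by simp only [hLimit, Set.mem_setOf_eq] at hu; rw [hu]; exact hε)
    obtain ⟨c, hcε, hc1⟩ := (hfreq.and_eventually (eventually_ge_atTop (1:ℝ))).exists
    have hKc := hK c hc1 x y'
    have h1 : ‖u‖ - ‖hScaled h c x y'‖ ≤ dist u (hScaled h c x y') := by
      rw [dist_eq_norm]; exact norm_sub_norm_le u (hScaled h c x y')
    linarith
  -- nonemptiness via compactness
  have hnonempty : (hLimit h x y).Nonempty := by
    have hmem : ∀ᶠ c in Filter.atTop, hScaled h c x y ∈ closedBall (0 : EuclideanSpace ℝ (Fin d)) R := by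
      filter_upwards [eventually_ge_atTop (1:ℝ)] with c hc
      simpa [mem_closedBall, dist_zero_right] using hK c hc x y
    have hcpt : IsCompact (closedBall (0 : EuclideanSpace ℝ (Fin d)) R) :=
      isCompact_closedBall _ _
    obtain ⟨u, _, hu_cl⟩ := hcpt.exists_clusterPt
      (le_principal_iff.2 (mem_map.2 hmem) :
        Filter.map (fun c => hScaled h c x y) Filter.atTop ≤ _)
    refine ⟨u, ?_⟩
    have hfreq : ∀ ε > 0, ∃ᶠ c in Filter.atTop, dist u (hScaled h c x y) < ε := by
      intro ε hε
      have := (mapClusterPt_iff_frequently.1 hu_cl) (ball u ε) (ball_mem_nhds u hε)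
      simpa [mem_ball, dist_comm] using this
    have hbd : Filter.IsBoundedUnder (· ≥ ·) Filter.atTop
        (fun c : ℝ => dist u (hScaled h c x y)) :=
      Filter.isBoundedUnder_of ⟨0, fun c => dist_nonneg⟩
    have hle : Filter.liminf (fun c : ℝ => dist u (hScaled h c x y)) Filter.atTop ≤ 0 := by
      refine le_of_forall_pos_le_add ?_
      intro ε hε
      have := Filter.liminf_le_of_frequently_le ((hfreq ε hε).mono fun c hc => hc.le) hbd
      linarith
    have hge : 0 ≤ Filter.liminf (fun c : ℝ => dist u (hScaled h c x y)) Filter.atTop := by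
      refine Filter.le_liminf_of_le ?_ (Filter.Eventually.of_forall fun c => dist_nonneg)
      apply Filter.IsBoundedUnder.isCoboundedUnder_ge
      apply Filter.isBoundedUnder_of_eventually_le (a := dist u 0 + R)
      filter_upwards [eventually_ge_atTop (1:ℝ)] with c hc
      calc dist u (hScaled h c x y) ≤ dist u 0 + dist 0 (hScaled h c x y) := dist_triangle _ _ _
        _ ≤ dist u 0 + R := by
            have := hK c hc x y
            simp only [dist_zero_left, dist_zero_right]
            linarith
    exact le_antisymm hle hge
  refine ⟨hnonempty, hbound y, ?_⟩
  have hsub : Hmap h x ⊆ closedBall (0 : EuclideanSpace ℝ (Fin d)) R := by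
    refine closure_minimal (convexHull_min ?_ (convex_closedBall _ _)) isClosed_closedBall
    refine Set.iUnion_subset fun y' u hu => ?_
    simpa [mem_closedBall, dist_zero_right] using hbound y' u hu
  intro u hu
  simpa [mem_closedBall, dist_zero_right] using hsub hu
end

section
/- Suppose x_n → x in ℝ^d, y_n → y in S, c_n ↑ ∞ and lim_{n→∞} h_{c_n}(x_n, y_n) = u. Then u ∈ h_∞(x, y). -/
open Filter Metric Set

/-- Assumption (S1): whenever `c_n ↑ ∞`, `y_n → y` in `S` and
`lim_n h_{c_n}(x, y_n) = u`, one has `u ∈ h_∞(x,y)`. -/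
def AssumptionS1 {d : ℕ} {S : Type*} [MetricSpace S]
    (h : EuclideanSpace ℝ (Fin d) → S → EuclideanSpace ℝ (Fin d)) : Prop :=
  ∀ (x u : EuclideanSpace ℝ (Fin d)) (c : ℕ → ℝ) (ys : ℕ → S) (y : S),
    Monotone c → Tendsto c atTop atTop → Tendsto ys atTop (nhds y) →
    Tendsto (fun n => hScaled h (c n) x (ys n)) atTop (nhds u) →
    u ∈ hLimit h x y

/-- Lemma 2.1: Suppose `x_n → x` in `ℝ^d`, `y_n → y` in `S`, `c_n ↑ ∞`
and `lim_n h_{c_n}(x_n, y_n) = u`. Then `u ∈ h_∞(x, y)`. -/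
theorem stmt3 {d : ℕ} {S : Type*} [MetricSpace S] [CompactSpace S]
    (h : EuclideanSpace ℝ (Fin d) → S → EuclideanSpace ℝ (Fin d)) (L : ℝ)
    (hjc : Continuous fun p : EuclideanSpace ℝ (Fin d) × S => h p.1 p.2)
    (hlip : ∀ (x₁ x₂ : EuclideanSpace ℝ (Fin d)) (y : S),
      ‖h x₁ y - h x₂ y‖ ≤ L * ‖x₁ - x₂‖)
    (hS1 : AssumptionS1 h)
    (x u : EuclideanSpace ℝ (Fin d)) (y : S)
    (xs : ℕ → EuclideanSpace ℝ (Fin d)) (ys : ℕ → S) (c : ℕ → ℝ)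
    (hc : Monotone c) (hcinf : Tendsto c atTop atTop)
    (hx : Tendsto xs atTop (nhds x)) (hy : Tendsto ys atTop (nhds y))
    (hu : Tendsto (fun n => hScaled h (c n) (xs n) (ys n)) atTop (nhds u)) :
    u ∈ hLimit h x y := by
  -- Key Lipschitz estimate for the rescaled maps (when c ≠ 0).
  have key : ∀ (cc : ℝ), cc ≠ 0 → ∀ (x₁ x₂ : EuclideanSpace ℝ (Fin d)) (z : S),
      dist (hScaled h cc x₁ z) (hScaled h cc x₂ z) ≤ L * dist x₁ x₂ := by
    intro cc hcc x₁ x₂ z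
    rw [dist_eq_norm, dist_eq_norm]
    have : hScaled h cc x₁ z - hScaled h cc x₂ z = cc⁻¹ • (h (cc • x₁) z - h (cc • x₂) z) := by
      simp [hScaled, smul_sub]
    rw [this, norm_smul]
    calc ‖cc⁻¹‖ * ‖h (cc • x₁) z - h (cc • x₂) z‖
        ≤ ‖cc⁻¹‖ * (L * ‖cc • x₁ - cc • x₂‖) := by
          exact mul_le_mul_of_nonneg_left (hlip _ _ _) (norm_nonneg _)
      _ = L * ‖x₁ - x₂‖ := by
          rw [← smul_sub, norm_smul, Real.norm_eq_abs, Real.norm_eq_abs, abs_inv]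
          have h2 : |cc| ≠ 0 := abs_ne_zero.mpr hcc
          field_simp
  -- Eventually c n > 0.
  have hpos : ∀ᶠ n in atTop, (0 : ℝ) < c n := hcinf.eventually_gt_atTop 0
  -- dist (hScaled h (c n) (xs n) (ys n)) (hScaled h (c n) x (ys n)) → 0
  have hdist0 : Tendsto (fun n => dist (hScaled h (c n) (xs n) (ys n))
      (hScaled h (c n) x (ys n))) atTop (nhds 0) := by
    have hbd : Tendsto (fun n => L * dist (xs n) x) atTop (nhds 0) := by
      have := (tendsto_const_nhds (x := L)).mul (tendsto_iff_dist_tendsto_zero.mp hx)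
      simpa using this
    apply squeeze_zero' (Eventually.of_forall fun n => dist_nonneg) _ hbd
    filter_upwards [hpos] with n hn
    exact key (c n) (ne_of_gt hn) _ _ _
  -- Hence hScaled h (c n) x (ys n) → u.
  have hu' : Tendsto (fun n => hScaled h (c n) x (ys n)) atTop (nhds u) := by
    rw [tendsto_iff_dist_tendsto_zero]
    have hA : Tendsto (fun n => dist (hScaled h (c n) (xs n) (ys n)) u) atTop (nhds 0) :=
      tendsto_iff_dist_tendsto_zero.mp hu
    have hsum : Tendsto (fun n => dist (hScaled h (c n) x (ys n))
        (hScaled h (c n) (xs n) (ys n)) + dist (hScaled h (c n) (xs n) (ys n)) u)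
        atTop (nhds 0) := by
      have := (hdist0).add hA
      simp only [add_zero] at this
      convert this using 2 with n
      · rw [dist_comm]
    exact squeeze_zero (fun n => dist_nonneg) (fun n => dist_triangle _ _ _) hsum
  exact hS1 x u c ys y hc hcinf hy hu'
end

section
/- If x_n → x in ℝ^d, (y_n) is any sequence in S and c_n → ∞, then d(h_{c_n}(x_n, y_n), H(x)) → 0, where d(u,A) := inf{‖u − a‖ : a ∈ A}. -/
open Filter Metric Set

lemma hScaled_lip {d : ℕ} {S : Type*}
    (h : EuclideanSpace ℝ (Fin d) → S → EuclideanSpace ℝ (Fin d)) {L : ℝ}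
    (hL : 0 ≤ L)
    (hlip : ∀ (x₁ x₂ : EuclideanSpace ℝ (Fin d)) (y : S),
      ‖h x₁ y - h x₂ y‖ ≤ L * ‖x₁ - x₂‖)
    {c : ℝ} (hc : 0 < c) (x₁ x₂ : EuclideanSpace ℝ (Fin d)) (y : S) :
    dist (hScaled h c x₁ y) (hScaled h c x₂ y) ≤ L * ‖x₁ - x₂‖ := by
  have h1 : dist (hScaled h c x₁ y) (hScaled h c x₂ y)
      = c⁻¹ * ‖h (c • x₁) y - h (c • x₂) y‖ := by
    rw [dist_eq_norm, hScaled, hScaled, ← smul_sub, norm_smul, Real.norm_eq_abs,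
      abs_of_pos (inv_pos.mpr hc)]
  have h2 : ‖h (c • x₁) y - h (c • x₂) y‖ ≤ L * (c * ‖x₁ - x₂‖) := by
    have := hlip (c • x₁) (c • x₂) y
    rwa [← smul_sub, norm_smul, Real.norm_eq_abs, abs_of_pos hc] at this
  rw [h1]
  calc c⁻¹ * ‖h (c • x₁) y - h (c • x₂) y‖ ≤ c⁻¹ * (L * (c * ‖x₁ - x₂‖)) := by
        exact mul_le_mul_of_nonneg_left h2 (inv_pos.mpr hc).le
    _ = L * ‖x₁ - x₂‖ := by field_simp

lemma hScaled_bound {d : ℕ} {S : Type*}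
    (h : EuclideanSpace ℝ (Fin d) → S → EuclideanSpace ℝ (Fin d)) {L M : ℝ}
    (hL : 0 ≤ L) (hM0 : 0 ≤ M)
    (hlip : ∀ (x₁ x₂ : EuclideanSpace ℝ (Fin d)) (y : S),
      ‖h x₁ y - h x₂ y‖ ≤ L * ‖x₁ - x₂‖)
    (hM : ∀ y : S, ‖h 0 y‖ ≤ M)
    {c : ℝ} (hc : 1 ≤ c) (x : EuclideanSpace ℝ (Fin d)) (y : S) :
    ‖hScaled h c x y‖ ≤ L * ‖x‖ + M := by
  have hc0 : 0 < c := lt_of_lt_of_le one_pos hc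
  have h2 : ‖h (c • x) y - h 0 y‖ ≤ L * (c * ‖x‖) := by
    have := hlip (c • x) 0 y
    rwa [sub_zero, norm_smul, Real.norm_eq_abs, abs_of_pos hc0] at this
  have h2' : ‖h (c • x) y‖ ≤ ‖h (c • x) y - h 0 y‖ + ‖h 0 y‖ := by
    simpa using norm_add_le (h (c • x) y - h 0 y) (h 0 y)
  have h3 : ‖h (c • x) y‖ ≤ L * (c * ‖x‖) + M :=
    h2'.trans (add_le_add h2 (hM y))
  have h4 : ‖hScaled h c x y‖ = c⁻¹ * ‖h (c • x) y‖ := by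
    rw [hScaled, norm_smul, Real.norm_eq_abs, abs_of_pos (inv_pos.mpr hc0)]
  rw [h4]
  have hinv : c⁻¹ ≤ 1 := inv_le_one_of_one_le₀ hc
  have hinvpos : (0 : ℝ) < c⁻¹ := inv_pos.mpr hc0
  calc c⁻¹ * ‖h (c • x) y‖ ≤ c⁻¹ * (L * (c * ‖x‖) + M) :=
        mul_le_mul_of_nonneg_left h3 hinvpos.le
    _ = L * ‖x‖ + c⁻¹ * M := by field_simp
    _ ≤ L * ‖x‖ + M := by nlinarith

/-- The key special case: the base point `x` is fixed. -/
lemma stmt4_aux {d : ℕ} {S : Type*} [MetricSpace S] [CompactSpace S]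
    (h : EuclideanSpace ℝ (Fin d) → S → EuclideanSpace ℝ (Fin d)) {L M : ℝ}
    (hL : 0 ≤ L) (hM0 : 0 ≤ M)
    (hlip : ∀ (x₁ x₂ : EuclideanSpace ℝ (Fin d)) (y : S),
      ‖h x₁ y - h x₂ y‖ ≤ L * ‖x₁ - x₂‖)
    (hM : ∀ y : S, ‖h 0 y‖ ≤ M)
    (hS1 : AssumptionS1 h)
    (x : EuclideanSpace ℝ (Fin d)) (ys : ℕ → S) (c : ℕ → ℝ)
    (hcinf : Tendsto c atTop atTop) :
    Tendsto (fun n => Metric.infDist (hScaled h (c n) x (ys n)) (Hmap h x))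
      atTop (nhds 0) := by
  apply Filter.tendsto_of_subseq_tendsto
  intro ns hns
  -- make `c ∘ ns` monotone along a subsequence
  obtain ⟨φ₁, hφ₁, hmono⟩ : ∃ φ₁ : ℕ → ℕ, StrictMono φ₁ ∧ StrictMono ((c ∘ ns) ∘ φ₁) :=
    strictMono_subseq_of_tendsto_atTop (hcinf.comp hns)
  have hc'' : Tendsto ((c ∘ ns) ∘ φ₁) atTop atTop :=
    (hcinf.comp hns).comp hφ₁.tendsto_atTop
  obtain ⟨N, hN⟩ : ∃ N, ∀ k ≥ N, 1 ≤ (c ∘ ns) (φ₁ k) :=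
    (hc''.eventually_ge_atTop 1).exists_forall_of_atTop
  set ρ : ℕ → ℕ := fun k => φ₁ (k + N) with hρ
  have hcρ1 : ∀ k, 1 ≤ c (ns (ρ k)) := fun k => hN _ (Nat.le_add_left N k)
  -- extract a convergent subsequence of the `y`'s
  obtain ⟨y, φ₂, hφ₂, hyconv⟩ := CompactSpace.tendsto_subseq (fun k => ys (ns (ρ k)))
  -- the vectors live in a compact ball
  have hball : ∀ k, hScaled h (c (ns (ρ (φ₂ k)))) x (ys (ns (ρ (φ₂ k))))
      ∈ Metric.closedBall (0 : EuclideanSpace ℝ (Fin d)) (L * ‖x‖ + M) := by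
    intro k
    rw [Metric.mem_closedBall, dist_zero_right]
    exact hScaled_bound h hL hM0 hlip hM (hcρ1 _) x _
  obtain ⟨u, _, φ₃, hφ₃, huconv⟩ :=
    (isCompact_closedBall (0 : EuclideanSpace ℝ (Fin d)) (L * ‖x‖ + M)).tendsto_subseq hball
  -- the final subsequence
  refine ⟨fun k => ρ (φ₂ (φ₃ k)), ?_⟩
  have hcm : Monotone fun k => c (ns (ρ (φ₂ (φ₃ k)))) := by
    intro a b hab
    exact (hmono.monotone (by
      simpa [hρ] using Nat.add_le_add_right ((hφ₂.comp hφ₃).monotone hab) N))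
  have hct : Tendsto (fun k => c (ns (ρ (φ₂ (φ₃ k))))) atTop atTop := by
    refine (hcinf.comp hns).comp ?_
    exact (hφ₁.comp ((hφ₂.comp hφ₃).add_const N)).tendsto_atTop
  have hyt : Tendsto (fun k => ys (ns (ρ (φ₂ (φ₃ k))))) atTop (nhds y) :=
    hyconv.comp hφ₃.tendsto_atTop
  have hut : Tendsto (fun k => hScaled h (c (ns (ρ (φ₂ (φ₃ k))))) x
      (ys (ns (ρ (φ₂ (φ₃ k)))))) atTop (nhds u) := huconv
  have humem : u ∈ hLimit h x y := hS1 x u _ _ y hcm hct hyt hut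
  have huH : u ∈ Hmap h x :=
    subset_closure (subset_convexHull ℝ _ (Set.mem_iUnion.mpr ⟨y, humem⟩))
  have : Tendsto (fun k => Metric.infDist (hScaled h (c (ns (ρ (φ₂ (φ₃ k))))) x
      (ys (ns (ρ (φ₂ (φ₃ k)))))) (Hmap h x)) atTop (nhds (Metric.infDist u (Hmap h x))) :=
    ((Metric.continuous_infDist_pt (Hmap h x)).tendsto u).comp hut
  rwa [Metric.infDist_zero_of_mem huH] at this

/-- If `x_n → x` in `ℝ^d`, `(y_n)` is any sequence in `S` and `c_n → ∞`,
then `d(h_{c_n}(x_n, y_n), H(x)) → 0`. -/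
theorem stmt4 {d : ℕ} {S : Type*} [MetricSpace S] [CompactSpace S]
    (h : EuclideanSpace ℝ (Fin d) → S → EuclideanSpace ℝ (Fin d)) (L : ℝ)
    (hjc : Continuous fun p : EuclideanSpace ℝ (Fin d) × S => h p.1 p.2)
    (hlip : ∀ (x₁ x₂ : EuclideanSpace ℝ (Fin d)) (y : S),
      ‖h x₁ y - h x₂ y‖ ≤ L * ‖x₁ - x₂‖)
    (hS1 : AssumptionS1 h)
    (x : EuclideanSpace ℝ (Fin d))
    (xs : ℕ → EuclideanSpace ℝ (Fin d)) (ys : ℕ → S) (c : ℕ → ℝ)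
    (hcinf : Tendsto c atTop atTop)
    (hx : Tendsto xs atTop (nhds x)) :
    Tendsto (fun n => Metric.infDist (hScaled h (c n) (xs n) (ys n)) (Hmap h x))
      atTop (nhds 0) := by
  set L' : ℝ := max L 0 with hL'def
  have hL' : 0 ≤ L' := le_max_right _ _
  have hlip' : ∀ (x₁ x₂ : EuclideanSpace ℝ (Fin d)) (y : S),
      ‖h x₁ y - h x₂ y‖ ≤ L' * ‖x₁ - x₂‖ := fun x₁ x₂ y =>
    (hlip x₁ x₂ y).trans (mul_le_mul_of_nonneg_right (le_max_left _ _) (norm_nonneg _))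
  have : Nonempty S := ⟨ys 0⟩
  obtain ⟨y₀, hy₀⟩ : ∃ y₀ : S, ∀ y : S, ‖h 0 y‖ ≤ ‖h 0 y₀‖ := by
    obtain ⟨y₀, -, hmax⟩ := isCompact_univ.exists_isMaxOn (Set.univ_nonempty)
      ((hjc.comp (continuous_const.prodMk continuous_id)).norm.continuousOn
        (s := (Set.univ : Set S)))
    exact ⟨y₀, fun y => hmax (Set.mem_univ y)⟩
  set M : ℝ := ‖h 0 y₀‖ with hMdef
  have hM0 : 0 ≤ M := norm_nonneg _
  have key := stmt4_aux h hL' hM0 hlip' hy₀ hS1 x ys c hcinf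
  have hdist : Tendsto (fun n => dist (xs n) x) atTop (nhds 0) :=
    tendsto_iff_dist_tendsto_zero.mp hx
  have hg : Tendsto (fun n => Metric.infDist (hScaled h (c n) x (ys n)) (Hmap h x)
      + L' * dist (xs n) x) atTop (nhds 0) := by
    have := key.add (tendsto_const_nhds.mul hdist : Tendsto (fun n => L' * dist (xs n) x)
      atTop (nhds (L' * 0)))
    simpa using this
  apply squeeze_zero' ?_ ?_ hg
  · exact Filter.Eventually.of_forall fun n => Metric.infDist_nonneg
  · filter_upwards [hcinf.eventually_gt_atTop 0] with n hcn
    calc Metric.infDist (hScaled h (c n) (xs n) (ys n)) (Hmap h x)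
        ≤ Metric.infDist (hScaled h (c n) x (ys n)) (Hmap h x)
          + dist (hScaled h (c n) (xs n) (ys n)) (hScaled h (c n) x (ys n)) :=
          Metric.infDist_le_infDist_add_dist
      _ ≤ Metric.infDist (hScaled h (c n) x (ys n)) (Hmap h x) + L' * dist (xs n) x := by
          gcongr
          simpa [dist_eq_norm] using hScaled_lip h hL' hlip' hcn (xs n) x (ys n)
end

section
/- Under assumptions (A1) and (S1), the set-valued map H is a Marchaud map: (i) H(x) is convex and compact for each x ∈ ℝ^d; (ii) there exists K > 0 with sup_{u ∈ H(x)} ‖u‖ ≤ K(1 + ‖x‖) for all x; (iii) H is upper semicontinuous, i.e. whenever x_n → x, u_n → u and u_n ∈ H(x_n) for all n, one has u ∈ H(x). -/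
open Filter Metric Set

private lemma aux_norm_hScaled {d : ℕ} {S : Type*} [MetricSpace S]
    (h : EuclideanSpace ℝ (Fin d) → S → EuclideanSpace ℝ (Fin d)) (L' M' : ℝ)
    (hM'0 : 0 ≤ M')
    (hlip' : ∀ (x₁ x₂ : EuclideanSpace ℝ (Fin d)) (y : S),
      ‖h x₁ y - h x₂ y‖ ≤ L' * ‖x₁ - x₂‖)
    (hM : ∀ y : S, ‖h 0 y‖ ≤ M') :
    ∀ c : ℝ, 1 ≤ c → ∀ x y, ‖hScaled h c x y‖ ≤ L' * ‖x‖ + M' := by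
  intro c hc x y
  have hc0 : (0:ℝ) < c := lt_of_lt_of_le one_pos hc
  have h2 : ‖h (c • x) y - h 0 y‖ ≤ L' * (c * ‖x‖) := by
    have := hlip' (c • x) 0 y
    rwa [sub_zero, norm_smul, Real.norm_eq_abs, abs_of_pos hc0] at this
  have h1 : ‖h (c • x) y‖ ≤ L' * (c * ‖x‖) + M' := by
    calc ‖h (c • x) y‖ = ‖(h (c • x) y - h 0 y) + h 0 y‖ := by rw [sub_add_cancel]
    _ ≤ ‖h (c • x) y - h 0 y‖ + ‖h 0 y‖ := norm_add_le _ _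
    _ ≤ L' * (c * ‖x‖) + M' := add_le_add h2 (hM y)
  have : ‖hScaled h c x y‖ = c⁻¹ * ‖h (c • x) y‖ := by
    rw [hScaled, norm_smul, Real.norm_eq_abs, abs_of_pos (inv_pos.2 hc0)]
  rw [this]
  calc c⁻¹ * ‖h (c • x) y‖ ≤ c⁻¹ * (L' * (c * ‖x‖) + M') := by
        exact mul_le_mul_of_nonneg_left h1 (le_of_lt (inv_pos.2 hc0))
  _ = L' * ‖x‖ + c⁻¹ * M' := by field_simp
  _ ≤ L' * ‖x‖ + M' := by
        have : c⁻¹ * M' ≤ 1 * M' :=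
          mul_le_mul_of_nonneg_right (inv_le_one_of_one_le₀ hc) hM'0
        linarith [this]
private lemma aux_bdd {d : ℕ} {S : Type*} [MetricSpace S]
    (h : EuclideanSpace ℝ (Fin d) → S → EuclideanSpace ℝ (Fin d)) (L' M' : ℝ)
    (hbnd : ∀ c : ℝ, 1 ≤ c → ∀ x y, ‖hScaled h c x y‖ ≤ L' * ‖x‖ + M')
    (x u : EuclideanSpace ℝ (Fin d)) (y : S) :
    IsBoundedUnder (· ≤ ·) atTop (fun c : ℝ => dist u (hScaled h c x y)) := by
  refine ⟨‖u‖ + (L' * ‖x‖ + M'), eventually_map.2 ?_⟩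
  filter_upwards [eventually_ge_atTop (1:ℝ)] with c hc
  calc dist u (hScaled h c x y) ≤ ‖u‖ + ‖hScaled h c x y‖ := by
        rw [dist_eq_norm]; exact norm_sub_le _ _
  _ ≤ ‖u‖ + (L' * ‖x‖ + M') := by linarith [hbnd c hc x y]

private lemma aux_hLimit_norm {d : ℕ} {S : Type*} [MetricSpace S]
    (h : EuclideanSpace ℝ (Fin d) → S → EuclideanSpace ℝ (Fin d)) (L' M' : ℝ)
    (hbnd : ∀ c : ℝ, 1 ≤ c → ∀ x y, ‖hScaled h c x y‖ ≤ L' * ‖x‖ + M')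
    {x u : EuclideanSpace ℝ (Fin d)} {y : S} (hu : u ∈ hLimit h x y) :
    ‖u‖ ≤ L' * ‖x‖ + M' := by
  refine le_of_forall_pos_le_add fun ε hε => ?_
  have hlim : liminf (fun c : ℝ => dist u (hScaled h c x y)) atTop < ε := by
    rw [hu]; exact hε
  have hfreq := frequently_lt_of_liminf_lt
    ((aux_bdd h L' M' hbnd x u y).isCoboundedUnder_ge) hlim
  obtain ⟨c, hc1, hcε⟩ := frequently_atTop.mp hfreq 1
  have : ‖u‖ ≤ dist u (hScaled h c x y) + ‖hScaled h c x y‖ := by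
    rw [dist_eq_norm]
    calc ‖u‖ = ‖(u - hScaled h c x y) + hScaled h c x y‖ := by rw [sub_add_cancel]
    _ ≤ _ := norm_add_le _ _
  linarith [hbnd c hc1 x y]
private lemma aux_approx {d : ℕ} {S : Type*} [MetricSpace S]
    (h : EuclideanSpace ℝ (Fin d) → S → EuclideanSpace ℝ (Fin d)) (L' M' : ℝ)
    (hbnd : ∀ c : ℝ, 1 ≤ c → ∀ x y, ‖hScaled h c x y‖ ≤ L' * ‖x‖ + M')
    (hS1 : AssumptionS1 h)
    (x u : EuclideanSpace ℝ (Fin d)) (y : S) (δ : ℝ)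
    (hlim : liminf (fun c : ℝ => dist u (hScaled h c x y)) atTop ≤ δ) :
    ∃ v ∈ hLimit h x y, dist u v ≤ δ := by
  have key : ∀ n : ℕ, ∀ b : ℝ, ∃ c : ℝ, b ≤ c ∧ 1 ≤ c ∧
      dist u (hScaled h c x y) < δ + 1/(n+1) := by
    intro n b
    have hpos : (0:ℝ) < 1/(n+1) := by positivity
    have h1 : liminf (fun c : ℝ => dist u (hScaled h c x y)) atTop < δ + 1/(n+1) :=
      lt_of_le_of_lt hlim (by linarith)
    have hfreq := frequently_lt_of_liminf_lt
      ((aux_bdd h L' M' hbnd x u y).isCoboundedUnder_ge) h1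
    obtain ⟨c, hc, hcd⟩ := frequently_atTop.mp hfreq (max b 1)
    exact ⟨c, le_trans (le_max_left _ _) hc, le_trans (le_max_right _ _) hc, hcd⟩
  choose g hg1 hg2 hg3 using key
  set c : ℕ → ℝ := fun n => Nat.rec (g 0 1) (fun n cn => g (n+1) (cn+1)) n with hcdef
  have hcsucc : ∀ n, c (n+1) = g (n+1) (c n + 1) := fun n => rfl
  have hc1 : ∀ n, 1 ≤ c n := by
    intro n; cases n with
    | zero => exact hg2 0 1
    | succ n => rw [hcsucc]; exact hg2 (n+1) (c n + 1)
  have hmono : StrictMono c := by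
    apply strictMono_nat_of_lt_succ
    intro n
    have := hg1 (n+1) (c n + 1)
    rw [hcsucc]; linarith
  have hgen : ∀ n : ℕ, (n:ℝ) ≤ c n := by
    intro n; induction n with
    | zero => simpa using le_trans zero_le_one (hc1 0)
    | succ n ih =>
        have := hg1 (n+1) (c n + 1)
        rw [hcsucc]; push_cast; linarith
  have htop : Tendsto c atTop atTop :=
    tendsto_atTop_mono hgen tendsto_natCast_atTop_atTop
  have hdist : ∀ n : ℕ, dist u (hScaled h (c n) x y) < δ + 1/(n+1) := by
    intro n; cases n with
    | zero => exact hg3 0 1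
    | succ n => rw [hcsucc]; exact hg3 (n+1) (c n + 1)
  have hmem : ∀ n : ℕ, hScaled h (c n) x y ∈ closedBall (0 : EuclideanSpace ℝ (Fin d)) (L' * ‖x‖ + M') := by
    intro n
    rw [mem_closedBall_zero_iff]
    exact hbnd (c n) (hc1 n) x y
  obtain ⟨v, hvball, φ, hφ, hconv⟩ :=
    (isCompact_closedBall (0 : EuclideanSpace ℝ (Fin d)) (L' * ‖x‖ + M')).tendsto_subseq hmem
  have hv : v ∈ hLimit h x y :=
    hS1 x v (c ∘ φ) (fun _ => y) y (hmono.monotone.comp hφ.monotone)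
      (htop.comp hφ.tendsto_atTop) tendsto_const_nhds hconv
  refine ⟨v, hv, le_of_forall_pos_le_add fun ε hε => ?_⟩
  have h1 : ∀ᶠ n in atTop, dist (hScaled h (c (φ n)) x y) v < ε/2 := by
    obtain ⟨N, hN⟩ := Metric.tendsto_atTop.mp hconv (ε/2) (by linarith)
    filter_upwards [eventually_ge_atTop N] with n hn
    exact hN n hn
  obtain ⟨N, hNε⟩ := exists_nat_one_div_lt (show (0:ℝ) < ε/2 by linarith)
  obtain ⟨n, hn1, hn2⟩ := (h1.and (eventually_ge_atTop N)).exists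
  have hφn : (N:ℝ) ≤ (φ n : ℝ) := by
    exact_mod_cast le_trans hn2 hφ.le_apply
  have hsmall : 1/((φ n : ℝ)+1) < ε/2 :=
    lt_of_le_of_lt (by apply one_div_le_one_div_of_le <;> linarith [Nat.cast_nonneg (α := ℝ) N]) hNε
  have := hdist (φ n)
  calc dist u v ≤ dist u (hScaled h (c (φ n)) x y) + dist (hScaled h (c (φ n)) x y) v :=
        dist_triangle _ _ _
  _ ≤ δ + ε := by linarith
open Pointwise
private lemma aux_lip {d : ℕ} {S : Type*} [MetricSpace S]
    (h : EuclideanSpace ℝ (Fin d) → S → EuclideanSpace ℝ (Fin d)) (L' M' : ℝ)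
    (hbnd : ∀ c : ℝ, 1 ≤ c → ∀ x y, ‖hScaled h c x y‖ ≤ L' * ‖x‖ + M')
    (hlip' : ∀ (x₁ x₂ : EuclideanSpace ℝ (Fin d)) (y : S),
      ‖h x₁ y - h x₂ y‖ ≤ L' * ‖x₁ - x₂‖)
    (x x' u : EuclideanSpace ℝ (Fin d)) (y : S) (hu : u ∈ hLimit h x' y) :
    liminf (fun c : ℝ => dist u (hScaled h c x y)) atTop ≤ L' * ‖x - x'‖ := by
  have hlipsc : ∀ c : ℝ, 1 ≤ c →
      dist (hScaled h c x' y) (hScaled h c x y) ≤ L' * ‖x - x'‖ := by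
    intro c hc
    have hc0 : (0:ℝ) < c := lt_of_lt_of_le one_pos hc
    rw [dist_eq_norm, hScaled, hScaled, ← smul_sub, norm_smul, Real.norm_eq_abs,
      abs_of_pos (inv_pos.2 hc0)]
    have h1 : ‖h (c • x') y - h (c • x) y‖ ≤ L' * (c * ‖x' - x‖) := by
      have := hlip' (c • x') (c • x) y
      rwa [← smul_sub, norm_smul, Real.norm_eq_abs, abs_of_pos hc0] at this
    calc c⁻¹ * ‖h (c • x') y - h (c • x) y‖ ≤ c⁻¹ * (L' * (c * ‖x' - x‖)) :=
          mul_le_mul_of_nonneg_left h1 (le_of_lt (inv_pos.2 hc0))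
    _ = L' * ‖x' - x‖ := by field_simp
    _ = L' * ‖x - x'‖ := by rw [norm_sub_rev]
  refine le_of_forall_pos_le_add fun ε hε => ?_
  refine liminf_le_of_frequently_le ?_ ⟨0, eventually_map.2 (Eventually.of_forall fun _ => dist_nonneg)⟩
  have hlim : liminf (fun c : ℝ => dist u (hScaled h c x' y)) atTop < ε := by
    rw [hu]; exact hε
  have hfreq := frequently_lt_of_liminf_lt
    ((aux_bdd h L' M' hbnd x' u y).isCoboundedUnder_ge) hlim
  refine (hfreq.and_eventually (eventually_ge_atTop (1:ℝ))).mono ?_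
  rintro c ⟨hcd, hc1⟩
  calc dist u (hScaled h c x y) ≤
        dist u (hScaled h c x' y) + dist (hScaled h c x' y) (hScaled h c x y) :=
        dist_triangle _ _ _
  _ ≤ L' * ‖x - x'‖ + ε := by linarith [hlipsc c hc1]

/-- Lemma 2.2: Under (A1) and (S1), the set-valued map `H` is a
Marchaud map: each `H(x)` is convex and compact, `H` has linear growth, and `H`
is upper semicontinuous (its graph is closed). -/
theorem stmt5 {d : ℕ} {S : Type*} [MetricSpace S] [CompactSpace S]
    (h : EuclideanSpace ℝ (Fin d) → S → EuclideanSpace ℝ (Fin d)) (L : ℝ)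
    (hjc : Continuous fun p : EuclideanSpace ℝ (Fin d) × S => h p.1 p.2)
    (hlip : ∀ (x₁ x₂ : EuclideanSpace ℝ (Fin d)) (y : S),
      ‖h x₁ y - h x₂ y‖ ≤ L * ‖x₁ - x₂‖)
    (hS1 : AssumptionS1 h) :
    (∀ x : EuclideanSpace ℝ (Fin d), Convex ℝ (Hmap h x) ∧ IsCompact (Hmap h x)) ∧
    (∃ K : ℝ, 0 < K ∧ ∀ x : EuclideanSpace ℝ (Fin d), ∀ u ∈ Hmap h x,
      ‖u‖ ≤ K * (1 + ‖x‖)) ∧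
    (∀ (xs : ℕ → EuclideanSpace ℝ (Fin d)) (x : EuclideanSpace ℝ (Fin d))
       (us : ℕ → EuclideanSpace ℝ (Fin d)) (u : EuclideanSpace ℝ (Fin d)),
      Tendsto xs atTop (nhds x) → Tendsto us atTop (nhds u) →
      (∀ n, us n ∈ Hmap h (xs n)) → u ∈ Hmap h x) := by
  -- Set up constants
  have hcont0 : Continuous fun y : S => ‖h 0 y‖ :=
    (hjc.comp (continuous_const.prodMk continuous_id)).norm
  obtain ⟨M0, hM0⟩ := (isCompact_range hcont0).bddAbove
  set L' : ℝ := max L 0 with hL'def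
  set M' : ℝ := max M0 0 with hM'def
  have hL'0 : 0 ≤ L' := le_max_right _ _
  have hM'0 : 0 ≤ M' := le_max_right _ _
  have hlip' : ∀ (x₁ x₂ : EuclideanSpace ℝ (Fin d)) (y : S),
      ‖h x₁ y - h x₂ y‖ ≤ L' * ‖x₁ - x₂‖ := fun x₁ x₂ y =>
    le_trans (hlip x₁ x₂ y)
      (mul_le_mul_of_nonneg_right (le_max_left _ _) (norm_nonneg _))
  have hM : ∀ y : S, ‖h 0 y‖ ≤ M' := fun y =>
    le_trans (hM0 (mem_range_self y)) (le_max_left _ _)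
  have hbnd := aux_norm_hScaled h L' M' hM'0 hlip' hM
  -- Part 1: convex and compact, with the ball bound
  have hsub : ∀ x : EuclideanSpace ℝ (Fin d),
      Hmap h x ⊆ closedBall 0 (L' * ‖x‖ + M') := by
    intro x
    apply closure_minimal _ isClosed_closedBall
    apply convexHull_min _ (convex_closedBall _ _)
    intro u hu
    obtain ⟨y, hy⟩ := mem_iUnion.mp hu
    rw [mem_closedBall_zero_iff]
    exact aux_hLimit_norm h L' M' hbnd hy
  have hcompact : ∀ x : EuclideanSpace ℝ (Fin d), IsCompact (Hmap h x) := fun x =>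
    IsCompact.of_isClosed_subset (isCompact_closedBall _ _) isClosed_closure (hsub x)
  have hconvex : ∀ x : EuclideanSpace ℝ (Fin d), Convex ℝ (Hmap h x) := fun x =>
    (convex_convexHull ℝ _).closure
  refine ⟨fun x => ⟨hconvex x, hcompact x⟩, ⟨L' + M' + 1, by positivity, ?_⟩, ?_⟩
  · intro x u hu
    have h1 := mem_closedBall_zero_iff.mp (hsub x hu)
    have h2 := norm_nonneg x
    nlinarith
  -- Part 3: upper semicontinuity
  have key : ∀ x x' : EuclideanSpace ℝ (Fin d), ∀ u ∈ Hmap h x',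
      ∃ v ∈ Hmap h x, dist u v ≤ L' * ‖x - x'‖ := by
    intro x x' u hu
    set D := L' * ‖x - x'‖ with hD
    set T := Hmap h x + closedBall (0 : EuclideanSpace ℝ (Fin d)) D with hT
    have hTclosed : IsClosed T := ((hcompact x).add (isCompact_closedBall _ _)).isClosed
    have hTconvex : Convex ℝ T := (hconvex x).add (convex_closedBall _ _)
    have hsubT : Hmap h x' ⊆ T := by
      apply closure_minimal _ hTclosed
      apply convexHull_min _ hTconvex
      intro w hw
      obtain ⟨y, hy⟩ := mem_iUnion.mp hw
      have hlm := aux_lip h L' M' hbnd hlip' x x' w y hy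
      obtain ⟨v, hv, hdv⟩ := aux_approx h L' M' hbnd hS1 x w y D hlm
      refine ⟨v, subset_closure (subset_convexHull ℝ _ (mem_iUnion.mpr ⟨y, hv⟩)),
        w - v, ?_, by show v + (w - v) = w; abel⟩
      rw [mem_closedBall_zero_iff, ← dist_eq_norm]
      exact hdv
    obtain ⟨v, hv, w, hw, hvw⟩ := hsubT hu
    refine ⟨v, hv, ?_⟩
    rw [dist_eq_norm, ← hvw]
    simpa [add_sub_cancel_left] using mem_closedBall_zero_iff.mp hw
  intro xs x us u hxs hus hmem
  obtain ⟨v, hv, hdist⟩ : ∃ v : ℕ → EuclideanSpace ℝ (Fin d),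
      (∀ n, v n ∈ Hmap h x) ∧ ∀ n, dist (us n) (v n) ≤ L' * ‖x - xs n‖ := by
    have := fun n => key x (xs n) (us n) (hmem n)
    choose v hv hd using this
    exact ⟨v, hv, hd⟩
  have hnorm : Tendsto (fun n => ‖x - xs n‖) atTop (nhds 0) := by
    have := tendsto_iff_dist_tendsto_zero.mp hxs
    simpa [dist_eq_norm, norm_sub_rev] using this
  have hdu : Tendsto (fun n => dist (us n) u) atTop (nhds 0) :=
    tendsto_iff_dist_tendsto_zero.mp hus
  have hvu : Tendsto v atTop (nhds u) := by
    rw [tendsto_iff_dist_tendsto_zero]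
    apply squeeze_zero (fun n => dist_nonneg)
      (g := fun n => L' * ‖x - xs n‖ + dist (us n) u)
    · intro n
      calc dist (v n) u ≤ dist (v n) (us n) + dist (us n) u := dist_triangle _ _ _
      _ ≤ L' * ‖x - xs n‖ + dist (us n) u := by
            rw [dist_comm]; exact add_le_add_left (hdist n) _
    · simpa using (tendsto_const_nhds.mul hnorm).add hdu
  exact isClosed_closure.mem_of_tendsto hvu (Eventually.of_forall hv)
end

section
/- Let (Ω, F, P) be a probability space with a filtration (F_k)_{0≤k≤N}, let K > 0, T > 0, and let a(k) ∈ (0,1] satisfy Σ_{k=0}^{N−1} a(k) ≤ T + 1. Let (x̂_k)_{0≤k≤N} be an ℝ^d-valued adapted process with ‖x̂_0‖ ≤ 1 almost surely, and suppose x̂_{k+1} = x̂_k + a(k)(ẑ_k + M̂_{k+1}) for 0 ≤ k < N, where ẑ_k is F_k-measurable with ‖ẑ_k‖ ≤ K(1 + ‖x̂_k‖) almost surely, and (M̂_{k+1}) are square-integrable martingale differences with E[‖M̂_{k+1}‖² | F_k] ≤ K(1 + ‖x̂_k‖²) almost surely. Then for all 0 ≤ k ≤ N, E‖x̂_k‖²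 ≤ ([1 + (K + √K)(T+1)] e^{(K+√K)(T+1)})². In particular the second moments of the rescaled trajectory are bounded uniformly: sup_{t ≥ 0} E‖x̂(t)‖² < ∞. -/
open Filter Metric Set MeasureTheory
open ENNReal in
private lemma l2_sqrt_eq {Ω : Type*} {m : MeasurableSpace Ω} {μ : Measure Ω}
    {E : Type*} [NormedAddCommGroup E] {f : Ω → E} (hf : MemLp f 2 μ) :
    eLpNorm f 2 μ = ENNReal.ofReal (Real.sqrt (∫ ω, ‖f ω‖ ^ 2 ∂μ)) := by
  rw [hf.eLpNorm_eq_integral_rpow_norm two_ne_zero ENNReal.ofNat_ne_top]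
  congr 1
  have h2 : ((2 : ℝ≥0∞)).toReal = (2 : ℝ) := by simp
  rw [h2]
  have : (∫ a, ‖f a‖ ^ (2:ℝ) ∂μ) = ∫ a, ‖f a‖ ^ 2 ∂μ := by
    apply integral_congr_ae
    filter_upwards with a
    rw [show ((2:ℝ)) = ((2:ℕ):ℝ) by norm_num, Real.rpow_natCast]
  rw [this, Real.sqrt_eq_rpow]
  norm_num

private lemma sqrtInt_add_le {Ω : Type*} {m : MeasurableSpace Ω} {μ : Measure Ω}
    {E : Type*} [NormedAddCommGroup E] {f g : Ω → E} (hf : MemLp f 2 μ) (hg : MemLp g 2 μ) :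
    Real.sqrt (∫ ω, ‖f ω + g ω‖ ^ 2 ∂μ) ≤
      Real.sqrt (∫ ω, ‖f ω‖ ^ 2 ∂μ) + Real.sqrt (∫ ω, ‖g ω‖ ^ 2 ∂μ) := by
  have h := eLpNorm_add_le hf.1 hg.1 one_le_two
  rw [l2_sqrt_eq (hf.add hg), l2_sqrt_eq hf, l2_sqrt_eq hg,
    ← ENNReal.ofReal_add (Real.sqrt_nonneg _) (Real.sqrt_nonneg _)] at h
  have := (ENNReal.ofReal_le_ofReal_iff (by positivity)).mp h
  simpa [Pi.add_apply] using this

private lemma sqrtInt_mono {Ω : Type*} {m : MeasurableSpace Ω} {μ : Measure Ω}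
    {E : Type*} [NormedAddCommGroup E] {f : Ω → E} {g : Ω → ℝ}
    (hgi : Integrable (fun ω => (g ω) ^ 2) μ)
    (h : ∀ᵐ ω ∂μ, ‖f ω‖ ≤ g ω) :
    Real.sqrt (∫ ω, ‖f ω‖ ^ 2 ∂μ) ≤ Real.sqrt (∫ ω, (g ω) ^ 2 ∂μ) := by
  apply Real.sqrt_le_sqrt
  apply integral_mono_of_nonneg (Filter.Eventually.of_forall fun ω => sq_nonneg _) hgi
  filter_upwards [h] with ω hω
  exact pow_le_pow_left₀ (norm_nonneg _) hω 2

private lemma sqrtInt_smul {Ω : Type*} {m : MeasurableSpace Ω} {μ : Measure Ω}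
    {E : Type*} [NormedAddCommGroup E] [NormedSpace ℝ E] (c : ℝ) (g : Ω → E) :
    Real.sqrt (∫ ω, ‖c • g ω‖ ^ 2 ∂μ) = |c| * Real.sqrt (∫ ω, ‖g ω‖ ^ 2 ∂μ) := by
  have h : ∀ ω, ‖c • g ω‖ ^ 2 = c ^ 2 * ‖g ω‖ ^ 2 := by
    intro ω
    rw [norm_smul, Real.norm_eq_abs, mul_pow, sq_abs]
  simp_rw [h, integral_const_mul, Real.sqrt_mul (sq_nonneg c), Real.sqrt_sq_eq_abs]

set_option maxHeartbeats 1000000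


/-- Lemma 3.1: a uniform second-moment bound for the rescaled iterates.
On a probability space with a filtration `(ℱ_k)`, if `x̂_0` has norm at most `1`,
`x̂_{k+1} = x̂_k + a(k)(ẑ_k + M̂_{k+1})` with `ẑ_k` adapted satisfying the linear growth
bound, `(M̂_{k+1})` square-integrable martingale differences with conditional second
moment bound, `a(k) ∈ (0,1]` and `Σ_{k<N} a(k) ≤ T + 1`, then for all `k ≤ N`,
`E‖x̂_k‖² ≤ ([1 + (K + √K)(T+1)] e^{(K+√K)(T+1)})²`. -/
theorem stmt6 {d : ℕ} {Ω : Type*} {m0 : MeasurableSpace Ω}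
    (μ : Measure Ω) [IsProbabilityMeasure μ] (ℱ : Filtration ℕ m0)
    (N : ℕ) (K T : ℝ) (hKpos : 0 < K) (hTpos : 0 < T)
    (a : ℕ → ℝ) (ha : ∀ k, 0 < a k) (ha1 : ∀ k, a k ≤ 1)
    (hsum : ∑ k ∈ Finset.range N, a k ≤ T + 1)
    (xh zh Mh : ℕ → Ω → EuclideanSpace ℝ (Fin d))
    (hx_adapted : ∀ k, StronglyMeasurable[ℱ k] (xh k))
    (hx_L2 : ∀ k, MemLp (xh k) 2 μ)
    (hx0 : ∀ᵐ ω ∂μ, ‖xh 0 ω‖ ≤ 1)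
    (hrec : ∀ k, k < N → ∀ᵐ ω ∂μ,
      xh (k+1) ω = xh k ω + a k • (zh k ω + Mh (k+1) ω))
    (hz_meas : ∀ k, StronglyMeasurable[ℱ k] (zh k))
    (hz_bound : ∀ k, k < N → ∀ᵐ ω ∂μ, ‖zh k ω‖ ≤ K * (1 + ‖xh k ω‖))
    (hM_L2 : ∀ k, MemLp (Mh (k+1)) 2 μ)
    (hM_adapted : ∀ k, StronglyMeasurable[ℱ (k+1)] (Mh (k+1)))
    (hM_mds : ∀ k, μ[Mh (k+1) | ℱ k] =ᵐ[μ] 0)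
    (hM_bound : ∀ k, k < N → ∀ᵐ ω ∂μ,
      (μ[fun ω' => ‖Mh (k+1) ω'‖ ^ 2 | ℱ k]) ω ≤ K * (1 + ‖xh k ω‖ ^ 2)) :
    ∀ k, k ≤ N →
      ∫ ω, ‖xh k ω‖ ^ 2 ∂μ ≤
        ((1 + (K + Real.sqrt K) * (T + 1)) * Real.exp ((K + Real.sqrt K) * (T + 1))) ^ 2 := by
  have hK2 : (0:ℝ) < Real.sqrt K := Real.sqrt_pos.mpr hKpos
  set L : ℝ := K + Real.sqrt K with hLdef
  have hL0 : 0 < L := by positivity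
  set u : ℕ → ℝ := fun k => Real.sqrt (∫ ω, ‖xh k ω‖ ^ 2 ∂μ) with hu
  have hu0 : ∀ k, 0 ≤ u k := fun k => Real.sqrt_nonneg _
  have hxsq : ∀ k, Integrable (fun ω => ‖xh k ω‖ ^ 2) μ := fun k =>
    (memLp_two_iff_integrable_sq_norm (hx_L2 k).1).mp (hx_L2 k)
  have husq : ∀ k, ∫ ω, ‖xh k ω‖ ^ 2 ∂μ = (u k) ^ 2 := fun k =>
    (Real.sq_sqrt (integral_nonneg fun ω => sq_nonneg _)).symm
  -- key induction
  have key : ∀ k, k ≤ N → 1 + u k ≤ 2 * ∏ j ∈ Finset.range k, (1 + a j * L) := by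
    intro k
    induction k with
    | zero =>
      intro _
      simp only [Finset.range_zero, Finset.prod_empty, mul_one]
      have h1 : ∫ ω, ‖xh 0 ω‖ ^ 2 ∂μ ≤ 1 := by
        have := integral_mono_ae (hxsq 0) (integrable_const (1:ℝ))
          (by filter_upwards [hx0] with ω hω
              calc ‖xh 0 ω‖ ^ 2 ≤ 1 ^ 2 := pow_le_pow_left₀ (norm_nonneg _) hω 2
                _ = 1 := one_pow 2)
        simpa using this
      have h2 : u 0 ≤ 1 := by
        rw [hu]
        calc Real.sqrt (∫ ω, ‖xh 0 ω‖ ^ 2 ∂μ) ≤ Real.sqrt 1 := Real.sqrt_le_sqrt h1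
          _ = 1 := Real.sqrt_one
      linarith
    | succ k ih =>
      intro hk1
      have hkN : k < N := hk1
      have ihk := ih hkN.le
      -- MemLp facts
      have hg : MemLp (fun ω => K * (1 + ‖xh k ω‖)) 2 μ :=
        ((memLp_const (1:ℝ)).add (hx_L2 k).norm).const_mul K
      have hgpos : ∀ᵐ ω ∂μ, 0 ≤ K * (1 + ‖xh k ω‖) :=
        Filter.Eventually.of_forall fun ω => by positivity
      have hz2meas : AEStronglyMeasurable (zh k) μ :=
        ((hz_meas k).mono (ℱ.le k)).aestronglyMeasurable
      have hzL2 : MemLp (zh k) 2 μ := by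
        apply MemLp.of_le hg hz2meas
        filter_upwards [hz_bound k hkN] with ω hω
        exact hω.trans (le_abs_self _)
      -- triangle inequality step
      have hrw : ∫ ω, ‖xh (k+1) ω‖ ^ 2 ∂μ
          = ∫ ω, ‖(xh k ω + a k • zh k ω) + a k • Mh (k+1) ω‖ ^ 2 ∂μ := by
        apply integral_congr_ae
        filter_upwards [hrec k hkN] with ω hω
        rw [hω, smul_add, add_assoc]
      have hsmulz : MemLp (fun ω => a k • zh k ω) 2 μ := hzL2.const_smul (a k)
      have hsmulM : MemLp (fun ω => a k • Mh (k+1) ω) 2 μ := (hM_L2 k).const_smul (a k)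
      have t1 : u (k+1) ≤ Real.sqrt (∫ ω, ‖xh k ω + a k • zh k ω‖ ^ 2 ∂μ)
          + Real.sqrt (∫ ω, ‖a k • Mh (k+1) ω‖ ^ 2 ∂μ) := by
        rw [hu]
        simp only
        rw [hrw]
        exact sqrtInt_add_le ((hx_L2 k).add hsmulz) hsmulM
      have t2 : Real.sqrt (∫ ω, ‖xh k ω + a k • zh k ω‖ ^ 2 ∂μ)
          ≤ u k + Real.sqrt (∫ ω, ‖a k • zh k ω‖ ^ 2 ∂μ) :=
        sqrtInt_add_le (hx_L2 k) hsmulz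
      -- bound on the 1 + ‖x‖ term
      have h1x : Real.sqrt (∫ ω, (1 + ‖xh k ω‖) ^ 2 ∂μ) ≤ 1 + u k := by
        have h := sqrtInt_add_le (E := ℝ) (μ := μ) (f := fun _ => (1:ℝ))
          (g := fun ω => ‖xh k ω‖) (memLp_const 1) (hx_L2 k).norm
        have e1 : ∫ ω, ‖(1:ℝ) + ‖xh k ω‖‖ ^ 2 ∂μ = ∫ ω, (1 + ‖xh k ω‖) ^ 2 ∂μ := by
          apply integral_congr_ae
          filter_upwards with ω
          rw [Real.norm_eq_abs, abs_of_nonneg (by positivity)]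
        have e2 : ∫ ω, ‖(1:ℝ)‖ ^ 2 ∂μ = 1 := by simp
        have e3 : ∫ ω, ‖‖xh k ω‖‖ ^ 2 ∂μ = ∫ ω, ‖xh k ω‖ ^ 2 ∂μ := by
          apply integral_congr_ae
          filter_upwards with ω
          rw [norm_norm]
        rw [e1, e2, e3] at h
        rw [Real.sqrt_one] at h
        exact h
      have h1xsq : Integrable (fun ω => (1 + ‖xh k ω‖) ^ 2) μ := by
        have : MemLp (fun ω => (1:ℝ) + ‖xh k ω‖) 2 μ := (memLp_const (1:ℝ)).add (hx_L2 k).norm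
        have := this.integrable_sq
        simpa using this
      -- z bound
      have hzb : Real.sqrt (∫ ω, ‖zh k ω‖ ^ 2 ∂μ) ≤ K * (1 + u k) := by
        have h1 : Real.sqrt (∫ ω, ‖zh k ω‖ ^ 2 ∂μ)
            ≤ Real.sqrt (∫ ω, (K * (1 + ‖xh k ω‖)) ^ 2 ∂μ) := by
          apply sqrtInt_mono _ (hz_bound k hkN)
          have := hg.integrable_sq
          simpa using this
        have h2 : Real.sqrt (∫ ω, (K * (1 + ‖xh k ω‖)) ^ 2 ∂μ)
            = K * Real.sqrt (∫ ω, (1 + ‖xh k ω‖) ^ 2 ∂μ) := by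
          simp_rw [mul_pow]
          rw [integral_const_mul, Real.sqrt_mul (sq_nonneg K), Real.sqrt_sq_eq_abs,
            abs_of_pos hKpos]
        calc Real.sqrt (∫ ω, ‖zh k ω‖ ^ 2 ∂μ)
            ≤ K * Real.sqrt (∫ ω, (1 + ‖xh k ω‖) ^ 2 ∂μ) := by rw [← h2]; exact h1
          _ ≤ K * (1 + u k) := by
              apply mul_le_mul_of_nonneg_left h1x hKpos.le
      -- M bound
      have hMint : Integrable (fun ω => ‖Mh (k+1) ω‖ ^ 2) μ :=
        (memLp_two_iff_integrable_sq_norm (hM_L2 k).1).mp (hM_L2 k)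
      have hMb : Real.sqrt (∫ ω, ‖Mh (k+1) ω‖ ^ 2 ∂μ) ≤ Real.sqrt K * (1 + u k) := by
        have hrhs : Integrable (fun ω => K * (1 + ‖xh k ω‖ ^ 2)) μ :=
          (((integrable_const (1:ℝ)).add (hxsq k)).const_mul K)
        have h0 : ∫ ω, ‖Mh (k+1) ω‖ ^ 2 ∂μ
            = ∫ ω, (μ[fun ω' => ‖Mh (k+1) ω'‖ ^ 2 | ℱ k]) ω ∂μ :=
          (integral_condExp (ℱ.le k)).symm
        have h1 : ∫ ω, (μ[fun ω' => ‖Mh (k+1) ω'‖ ^ 2 | ℱ k]) ω ∂μ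
            ≤ ∫ ω, K * (1 + ‖xh k ω‖ ^ 2) ∂μ :=
          integral_mono_ae integrable_condExp hrhs (hM_bound k hkN)
        have h2 : ∫ ω, K * (1 + ‖xh k ω‖ ^ 2) ∂μ = K * (1 + (u k) ^ 2) := by
          rw [integral_const_mul, integral_add (integrable_const 1) (hxsq k), integral_const,
            husq k]
          simp
        have h3 : ∫ ω, ‖Mh (k+1) ω‖ ^ 2 ∂μ ≤ K * (1 + u k) ^ 2 := by
          have : K * (1 + (u k) ^ 2) ≤ K * (1 + u k) ^ 2 := by nlinarith [hu0 k]
          calc ∫ ω, ‖Mh (k+1) ω‖ ^ 2 ∂μ ≤ K * (1 + (u k) ^ 2) := by rw [h0]; linarith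
            _ ≤ K * (1 + u k) ^ 2 := this
        calc Real.sqrt (∫ ω, ‖Mh (k+1) ω‖ ^ 2 ∂μ)
            ≤ Real.sqrt (K * (1 + u k) ^ 2) := Real.sqrt_le_sqrt h3
          _ = Real.sqrt K * (1 + u k) := by
              rw [Real.sqrt_mul hKpos.le, Real.sqrt_sq (by nlinarith [hu0 k])]
      -- combine
      have hsz := sqrtInt_smul (μ := μ) (a k) (zh k)
      have hsM := sqrtInt_smul (μ := μ) (a k) (Mh (k+1))
      have haabs : |a k| = a k := abs_of_pos (ha k)
      have t3 : u (k+1) ≤ u k + a k * (K * (1 + u k)) + a k * (Real.sqrt K * (1 + u k)) := by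
        have e1 : Real.sqrt (∫ ω, ‖a k • zh k ω‖ ^ 2 ∂μ)
            ≤ a k * (K * (1 + u k)) := by
          rw [hsz, haabs]
          exact mul_le_mul_of_nonneg_left hzb (ha k).le
        have e2 : Real.sqrt (∫ ω, ‖a k • Mh (k+1) ω‖ ^ 2 ∂μ)
            ≤ a k * (Real.sqrt K * (1 + u k)) := by
          rw [hsM, haabs]
          exact mul_le_mul_of_nonneg_left hMb (ha k).le
        linarith
      have hstep : 1 + u (k+1) ≤ (1 + a k * L) * (1 + u k) := by
        rw [hLdef]; nlinarith [hu0 k, (ha k).le]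
      rw [Finset.prod_range_succ]
      have hprodpos : (0:ℝ) < ∏ j ∈ Finset.range k, (1 + a j * L) :=
        Finset.prod_pos fun j _ => by nlinarith [ha j, hL0]
      calc 1 + u (k+1) ≤ (1 + a k * L) * (1 + u k) := hstep
        _ ≤ (1 + a k * L) * (2 * ∏ j ∈ Finset.range k, (1 + a j * L)) := by
            apply mul_le_mul_of_nonneg_left ihk (by nlinarith [ha k, hL0])
        _ = 2 * ((∏ j ∈ Finset.range k, (1 + a j * L)) * (1 + a k * L)) := by ring
  -- conclusion
  intro k hk
  have hk2 := key k hk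
  set B : ℝ := L * (T + 1) with hB
  have hB0 : 0 < B := by positivity
  have hPk : ∏ j ∈ Finset.range k, (1 + a j * L) ≤ Real.exp B := by
    calc ∏ j ∈ Finset.range k, (1 + a j * L)
        ≤ ∏ j ∈ Finset.range k, Real.exp (a j * L) := by
          apply Finset.prod_le_prod (fun j _ => by nlinarith [ha j, hL0])
          intro j _
          have := Real.add_one_le_exp (a j * L)
          linarith
      _ = Real.exp (∑ j ∈ Finset.range k, a j * L) := by rw [Real.exp_sum]
      _ ≤ Real.exp B := by
          apply Real.exp_le_exp.mpr
          rw [← Finset.sum_mul, hB]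
          have hsk : ∑ j ∈ Finset.range k, a j ≤ ∑ j ∈ Finset.range N, a j :=
            Finset.sum_le_sum_of_subset_of_nonneg
              (Finset.range_subset_range.mpr hk) (fun i _ _ => (ha i).le)
          nlinarith [hL0]
  have hexp := Real.exp_pos B
  have hexpneg := Real.add_one_le_exp (-B)
  have hexpinv : Real.exp (-B) * Real.exp B = 1 := by
    rw [← Real.exp_add]; simp
  have h4 : (1 - B) * Real.exp B ≤ 1 := by nlinarith
  have hu_le : u k ≤ (1 + B) * Real.exp B := by nlinarith
  rw [husq k]
  exact pow_le_pow_left₀ (hu0 k) hu_le 2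
end
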